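/- Let M be an (R,S)-bimodule and let E be an injective right S-module. If M is torsionfree as a left R-module (i.e., left multiplication on M by any regular element of R is injective), then Hom_S(M, E) is divisible as a right R-module (i.e., Hom_S(M,E)·c = Hom_S(M,E) for every regular element c of R, where the right R-action is (f·c)(m) = f(cm)). -/
import Mathlib

universe u

/-- Let `M` be an `(R,S)`-bimodule and `E` an injective right `S`-module.
If `M` is torsionfree as a left `R`-module (left multiplication by every regular element of
`R` is injective on `M`), then `Hom_S(M, E)` is divisible as a right `R`-module: for every
regular `c ∈ R` and every `f ∈ Hom_S(M,E)` there is `g ∈ Hom_S(M,E)` with `g·c = f`,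
where `(g·c)(m) = g(c·m)`. -/
theorem statement16 {R S M E : Type u} [Ring R] [Ring S]
    [AddCommGroup M] [Module R M] [Module Sᵐᵒᵖ M] [SMulCommClass R Sᵐᵒᵖ M]
    [AddCommGroup E] [Module Sᵐᵒᵖ E] (hE : Module.Injective Sᵐᵒᵖ E)
    (hM : ∀ c : R, ((∀ z : R, c * z = 0 → z = 0) ∧ (∀ z : R, z * c = 0 → z = 0)) →
      Function.Injective (fun m : M => c • m)) :
    ∀ c : R, ((∀ z : R, c * z = 0 → z = 0) ∧ (∀ z : R, z * c = 0 → z = 0)) →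
      ∀ f : M →ₗ[Sᵐᵒᵖ] E, ∃ g : M →ₗ[Sᵐᵒᵖ] E, ∀ m : M, g (c • m) = f m := by
  intro c hc f
  let i : M →ₗ[Sᵐᵒᵖ] M :=
    { toFun := fun m => c • m
      map_add' := fun x y => smul_add c x y
      map_smul' := fun s x => smul_comm c s x }
  obtain ⟨g, hg⟩ := hE.out i (hM c hc) f
  exact ⟨g, hg⟩
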